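/- Let α > 0 and let u be of class C² on M̄, vanishing on the lateral boundary Γ_l = {0,L}×[−h,0] and on the bottom Γ_b = [0,L]×{−h}, satisfying the Robin condition ∂_z u(x,0) + α u(x,0) = 0 for all x ∈ [0,L], and with ∫_{−h}^0 u(x,z) dz = 0 for all x. Let Q denote the orthogonal complement of the vertical average, (Qg)(x,z) = g(x,z) − (1/h) ∫_{−h}^0 g(x,s) ds. Then the following cancellation identity holds: ∫_M ( u ∂_x u + w(u) ∂_z u ) · ( −Q ∂_{zz} u ) dM = −(2/h) ∫_M u(x,z) ∂_x u(x,z) ( α u(x,0) + ∂_z u(x,−h) ) dM. -/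

import Mathlib

open MeasureTheory Set intervalIntegral

/-- Partial derivative in the first (horizontal, `x`) variable. -/
noncomputable def pdx (f : ℝ × ℝ → ℝ) (p : ℝ × ℝ) : ℝ := fderiv ℝ f p (1, 0)

/-- Partial derivative in the second (vertical, `z`) variable. -/
noncomputable def pdz (f : ℝ × ℝ → ℝ) (p : ℝ × ℝ) : ℝ := fderiv ℝ f p (0, 1)

/-- The diagnostic vertical velocity `w(u)(x,z) = ∫_z^0 ∂ₓ u(x,s) ds`. -/
noncomputable def wOp (u : ℝ × ℝ → ℝ) (p : ℝ × ℝ) : ℝ := ∫ s in p.2..0, pdx u (p.1, s)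

/-- The open domain `M = (0,L) × (-h,0)`. -/
def dom (L h : ℝ) : Set (ℝ × ℝ) := Ioo 0 L ×ˢ Ioo (-h) 0

/-- The closed domain `M̄ = [0,L] × [-h,0]`. -/
def cdom (L h : ℝ) : Set (ℝ × ℝ) := Icc 0 L ×ˢ Icc (-h) 0

/-- The `L²(M)` norm. -/
noncomputable def l2 (L h : ℝ) (f : ℝ × ℝ → ℝ) : ℝ :=
  Real.sqrt (∫ p in dom L h, f p ^ 2)

/-- The `H¹(M)` norm. -/
noncomputable def h1n (L h : ℝ) (f : ℝ × ℝ → ℝ) : ℝ :=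
  Real.sqrt (l2 L h f ^ 2 + l2 L h (pdx f) ^ 2 + l2 L h (pdz f) ^ 2)

/-- The `H²(M)` norm. -/
noncomputable def h2n (L h : ℝ) (f : ℝ × ℝ → ℝ) : ℝ :=
  Real.sqrt (h1n L h f ^ 2 + l2 L h (pdx (pdx f)) ^ 2 + l2 L h (pdx (pdz f)) ^ 2
    + l2 L h (pdz (pdz f)) ^ 2)

/-- The orthogonal complement `Q` of the vertical averaging operator:
`(Q g)(x,z) = g(x,z) - (1/h) ∫_{-h}^0 g(x,s) ds`. -/
noncomputable def Qop (h : ℝ) (g : ℝ × ℝ → ℝ) (p : ℝ × ℝ) : ℝ :=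
  g p - (1 / h) * ∫ s in (-h)..(0:ℝ), g (p.1, s)

/-! Since `∫_{-h}^0 ∂_zz u dz = ∂_z u(x,0) - ∂_z u(x,-h) = -(α u(x,0) + ∂_z u(x,-h))`, the integrand
splits into `-(u ∂_x u + w ∂_z u) ∂_zz u` and `-(1/h)(u ∂_x u + w ∂_z u)(α u(x,0) + ∂_z u(x,-h))`.

The first part integrates to zero: since `∂_z w = -∂_x u`,
`(u ∂_x u + w ∂_z u) ∂_zz u = ∂_z (u ∂_x u ∂_z u + w (∂_z u)²/2) - ∂_x (u (∂_z u)²/2)`.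
On the boundary `w(x,0) = 0`, `w(x,-h) = ∂_x ∫_{-h}^0 u dz = 0` and `u` vanishes on the bottom
and the sides, so only the top term `u ∂_x u ∂_z u = -∂_x (α u³/3)` survives, and it integrates
to zero in `x`.

In the second part the factor depends on `x` only, and integrating by parts in `z` gives
`∫_{-h}^0 w ∂_z u dz = ∫_{-h}^0 u ∂_x u dz`, which doubles the `u ∂_x u` term. -/

section PartialDerivatives

variable {f : ℝ × ℝ → ℝ} {x z : ℝ}

theorem hasDerivAt_pdx (hf : DifferentiableAt ℝ f (x, z)) :
    HasDerivAt (fun t => f (t, z)) (pdx f (x, z)) x :=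
  hf.hasFDerivAt.comp_hasDerivAt x ((hasDerivAt_id x).prodMk (hasDerivAt_const x z))

theorem hasDerivAt_pdz (hf : DifferentiableAt ℝ f (x, z)) :
    HasDerivAt (fun t => f (x, t)) (pdz f (x, z)) z :=
  hf.hasFDerivAt.comp_hasDerivAt z ((hasDerivAt_const z x).prodMk (hasDerivAt_id z))

theorem ContDiff.pdx_right {m n : WithTop ℕ∞} (hf : ContDiff ℝ n f) (hmn : m + 1 ≤ n) :
    ContDiff ℝ m (pdx f) :=
  (ContinuousLinearMap.apply ℝ ℝ ((1 : ℝ), (0 : ℝ))).contDiff.comp (hf.fderiv_right hmn)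

theorem ContDiff.pdz_right {m n : WithTop ℕ∞} (hf : ContDiff ℝ n f) (hmn : m + 1 ≤ n) :
    ContDiff ℝ m (pdz f) :=
  (ContinuousLinearMap.apply ℝ ℝ ((0 : ℝ), (1 : ℝ))).contDiff.comp (hf.fderiv_right hmn)

theorem ContDiff.continuous_pdx {n : WithTop ℕ∞} (hf : ContDiff ℝ n f) (hn : 1 ≤ n) :
    Continuous (pdx f) :=
  (hf.pdx_right (m := 0) (by rwa [zero_add])).continuous

theorem ContDiff.continuous_pdz {n : WithTop ℕ∞} (hf : ContDiff ℝ n f) (hn : 1 ≤ n) :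
    Continuous (pdz f) :=
  (hf.pdz_right (m := 0) (by rwa [zero_add])).continuous

theorem pdx_pdz_comm (hf : ContDiff ℝ 2 f) : pdx (pdz f) = pdz (pdx f) := by
  ext p
  have hd : DifferentiableAt ℝ (fderiv ℝ f) p :=
    (hf.fderiv_right (m := 1) (by norm_num)).differentiable one_ne_zero p
  have happly (v : ℝ × ℝ) : HasFDerivAt (fun q => fderiv ℝ f q v)
      ((ContinuousLinearMap.apply ℝ ℝ v).comp (fderiv ℝ (fderiv ℝ f) p)) p :=
    (ContinuousLinearMap.apply ℝ ℝ v).hasFDerivAt.comp p hd.hasFDerivAt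
  change fderiv ℝ (fun q => fderiv ℝ f q (0, 1)) p (1, 0)
    = fderiv ℝ (fun q => fderiv ℝ f q (1, 0)) p (0, 1)
  rw [(happly _).fderiv, (happly _).fderiv]
  exact hf.contDiffAt.isSymmSndFDerivAt (by simp) (1, 0) (0, 1)

theorem integral_pdz (hf : ContDiff ℝ 1 f) (x a b : ℝ) :
    ∫ s in a..b, pdz f (x, s) = f (x, b) - f (x, a) := by
  have hcfz := hf.continuous_pdz le_rfl
  exact integral_eq_sub_of_hasDerivAt (fun s _ => hasDerivAt_pdz (hf.differentiable one_ne_zero _))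
    ((by fun_prop : Continuous fun s => pdz f (x, s)).intervalIntegrable _ _)

end PartialDerivatives

theorem integral_integral_eq_sub_of_hasDerivAt {F F' : ℝ → ℝ → ℝ} {a b c d : ℝ}
    (hderiv : ∀ x ∈ uIcc a b, ∀ y, HasDerivAt (F · y) (F' x y) x)
    (hF' : Continuous F'.uncurry) :
    ∫ x in a..b, ∫ y in c..d, F' x y = ∫ y in c..d, (F b y - F a y) := by
  rw [intervalIntegral_intervalIntegral_swap <|
    (hF'.continuousOn.integrableOn_compact (isCompact_uIcc.prod isCompact_uIcc)).mono_set
      (prod_mono uIoc_subset_uIcc uIoc_subset_uIcc)]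
  refine integral_congr fun y _ => integral_eq_sub_of_hasDerivAt (fun x hx => hderiv x hx y) ?_
  exact (hF'.comp (continuous_id.prodMk continuous_const)).intervalIntegrable _ _

theorem hasDerivAt_intervalIntegral_slice {f : ℝ × ℝ → ℝ} (hf : ContDiff ℝ 1 f) (a b x : ℝ) :
    HasDerivAt (fun t => ∫ s in a..b, f (t, s)) (∫ s in a..b, pdx f (x, s)) x := by
  have hcfx := hf.continuous_pdx le_rfl
  have hprimitive : (fun t => ∫ s in a..b, f (t, s))
      = fun t => (∫ s in a..b, f (x, s)) + ∫ r in x..t, ∫ s in a..b, pdx f (r, s) := by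
    ext t
    rw [integral_integral_eq_sub_of_hasDerivAt
      (fun r _ s => hasDerivAt_pdx (hf.differentiable one_ne_zero _)) (by fun_prop),
      integral_sub ((by fun_prop : Continuous _).intervalIntegrable _ _)
        ((by fun_prop : Continuous _).intervalIntegrable _ _)]
    ring
  have hG : Continuous fun t => ∫ s in a..b, pdx f (t, s) := by fun_prop
  rw [hprimitive]
  exact (hG.integral_hasStrictDerivAt x x).hasDerivAt.const_add _

section VerticalVelocity

variable {u : ℝ × ℝ → ℝ}

theorem wOp_zero (x : ℝ) : wOp u (x, 0) = 0 := by
  simp [wOp]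

theorem continuous_wOp (hu : Continuous (pdx u)) : Continuous (wOp u) := by
  have hcont : Continuous fun p : ℝ × ℝ => ∫ s in (0 : ℝ)..p.2, pdx u (p.1, s) :=
    continuous_parametric_intervalIntegral_of_continuous
      (f := fun (p : ℝ × ℝ) s => pdx u (p.1, s)) (by fun_prop) continuous_snd
  rw [show wOp u = fun p => -∫ s in (0 : ℝ)..p.2, pdx u (p.1, s) from
    funext fun p => integral_symm 0 p.2]
  exact hcont.neg

theorem hasDerivAt_wOp (hu : Continuous (pdx u)) (x z : ℝ) :
    HasDerivAt (fun t => wOp u (x, t)) (-pdx u (x, z)) z := by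
  have hslice : Continuous fun s => pdx u (x, s) := by fun_prop
  exact integral_hasDerivAt_left (hslice.intervalIntegrable _ _)
    (hslice.stronglyMeasurableAtFilter _ _) hslice.continuousAt

theorem wOp_bottom_eq_zero {L h x : ℝ} (hu : ContDiff ℝ 1 u) (hL : 0 < L)
    (hmean : ∀ x ∈ Icc 0 L, ∫ z in (-h)..0, u (x, z) = 0) (hx : x ∈ Icc 0 L) :
    wOp u (x, -h) = 0 :=
  (uniqueDiffOn_Icc hL x hx).eq_deriv _
    (hasDerivAt_intervalIntegral_slice hu _ _ x).hasDerivWithinAt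
    ((hasDerivWithinAt_const x _ 0).congr_of_mem hmean hx)

end VerticalVelocity

section Rectangle

variable {L h : ℝ} {f : ℝ × ℝ → ℝ}

theorem measurableSet_dom : MeasurableSet (dom L h) :=
  measurableSet_Ioo.prod measurableSet_Ioo

theorem integrableOn_dom (hf : Continuous f) : IntegrableOn f (dom L h) :=
  (hf.continuousOn.integrableOn_compact (isCompact_Icc.prod isCompact_Icc)).mono_set
    (prod_mono Ioo_subset_Icc_self Ioo_subset_Icc_self)

theorem setIntegral_dom (hf : Continuous f) (hL : 0 ≤ L) (hh : 0 ≤ h) :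
    ∫ p in dom L h, f p = ∫ x in 0..L, ∫ z in (-h)..0, f (x, z) := by
  rw [dom, Measure.volume_eq_prod, setIntegral_prod f (integrableOn_dom hf), integral_of_le hL,
    integral_Ioc_eq_integral_Ioo]
  refine setIntegral_congr_fun measurableSet_Ioo fun x _ => ?_
  rw [integral_of_le (by linarith), integral_Ioc_eq_integral_Ioo]

end Rectangle

section Slices

variable {u : ℝ × ℝ → ℝ} {h x : ℝ}

theorem integral_wOp_mul_pdz (hu : ContDiff ℝ 1 u) (hbot : u (x, -h) = 0) :
    ∫ z in (-h)..0, wOp u (x, z) * pdz u (x, z) = ∫ z in (-h)..0, u (x, z) * pdx u (x, z) := by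
  have hcux := hu.continuous_pdx le_rfl
  have hcuz := hu.continuous_pdz le_rfl
  rw [integral_mul_deriv_eq_deriv_mul (fun z _ => hasDerivAt_wOp hcux x z)
    (fun z _ => hasDerivAt_pdz (hu.differentiable one_ne_zero _))
    ((by fun_prop : Continuous fun z => -pdx u (x, z)).intervalIntegrable _ _)
    ((by fun_prop : Continuous fun z => pdz u (x, z)).intervalIntegrable _ _),
    wOp_zero, hbot, zero_mul, mul_zero, sub_zero, zero_sub, ← intervalIntegral.integral_neg]
  exact integral_congr fun z _ => by ring

theorem integral_advection_mul_pdz_pdz_slice (hu : ContDiff ℝ 2 u) (hbot : u (x, -h) = 0)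
    (hw : wOp u (x, -h) = 0) :
    ∫ z in (-h)..0,
        (u (x, z) * pdx u (x, z) + wOp u (x, z) * pdz u (x, z)) * pdz (pdz u) (x, z)
      = u (x, 0) * pdx u (x, 0) * pdz u (x, 0)
        - ∫ z in (-h)..0, (pdx u (x, z) * pdz u (x, z) ^ 2 / 2
            + u (x, z) * pdz u (x, z) * pdx (pdz u) (x, z)) := by
  have hux : ContDiff ℝ 1 (pdx u) := hu.pdx_right (by norm_num)
  have huz : ContDiff ℝ 1 (pdz u) := hu.pdz_right (by norm_num)
  have hcux := hux.continuous
  have hcuzx := huz.continuous_pdx le_rfl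
  have hcuzz := huz.continuous_pdz le_rfl
  have hcw := continuous_wOp hcux
  have hprimitive : ∀ z, HasDerivAt
      (fun t => u (x, t) * pdx u (x, t) * pdz u (x, t) + wOp u (x, t) * (pdz u (x, t) ^ 2 / 2))
      ((u (x, z) * pdx u (x, z) + wOp u (x, z) * pdz u (x, z)) * pdz (pdz u) (x, z)
        + (pdx u (x, z) * pdz u (x, z) ^ 2 / 2 + u (x, z) * pdz u (x, z) * pdx (pdz u) (x, z)))
      z := by
    intro z
    have hu_z := hasDerivAt_pdz (hu.differentiable two_ne_zero (x, z))
    have hux_z := hasDerivAt_pdz (hux.differentiable one_ne_zero (x, z))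
    have huz_z := hasDerivAt_pdz (huz.differentiable one_ne_zero (x, z))
    rw [← pdx_pdz_comm hu] at hux_z
    refine (((hu_z.fun_mul hux_z).fun_mul huz_z).fun_add
      ((hasDerivAt_wOp hcux x z).fun_mul ((huz_z.fun_pow 2).div_const 2))).congr_deriv ?_
    norm_num
    ring
  have hftc := integral_eq_sub_of_hasDerivAt (fun z _ => hprimitive z)
    ((by fun_prop : Continuous _).intervalIntegrable (-h) 0)
  rw [integral_add ((by fun_prop : Continuous _).intervalIntegrable _ _)
    ((by fun_prop : Continuous _).intervalIntegrable _ _), wOp_zero, hbot, hw] at hftc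
  linarith

theorem Qop_pdz_pdz (hu : ContDiff ℝ 2 u) (h : ℝ) (p : ℝ × ℝ) :
    Qop h (pdz (pdz u)) p = pdz (pdz u) p - 1 / h * (pdz u (p.1, 0) - pdz u (p.1, -h)) := by
  rw [Qop, integral_pdz (hu.pdz_right (by norm_num))]

end Slices

section Domain

variable {L h α : ℝ} {u : ℝ × ℝ → ℝ}

theorem integral_advection_mul_of_fst (hu : ContDiff ℝ 1 u) (hL : 0 ≤ L) (hh : 0 ≤ h)
    (hbot : ∀ x ∈ Icc 0 L, u (x, -h) = 0) {c : ℝ → ℝ} (hc : Continuous c) :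
    ∫ p in dom L h, (u p * pdx u p + wOp u p * pdz u p) * c p.1
      = 2 * ∫ p in dom L h, u p * pdx u p * c p.1 := by
  have hcux := hu.continuous_pdx le_rfl
  have hcuz := hu.continuous_pdz le_rfl
  have hcw := continuous_wOp hcux
  rw [setIntegral_dom (by fun_prop) hL hh, setIntegral_dom (by fun_prop) hL hh,
    ← intervalIntegral.integral_const_mul]
  refine integral_congr fun x hx => ?_
  rw [uIcc_of_le hL] at hx
  simp only [intervalIntegral.integral_mul_const]
  rw [integral_add ((by fun_prop : Continuous _).intervalIntegrable _ _)
    ((by fun_prop : Continuous _).intervalIntegrable _ _), integral_wOp_mul_pdz hu (hbot x hx)]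
  ring

theorem integral_advection_mul_pdz_pdz (hu : ContDiff ℝ 2 u) (hL : 0 ≤ L) (hh : 0 ≤ h)
    (hlat : ∀ z ∈ Icc (-h) 0, u (0, z) = 0 ∧ u (L, z) = 0)
    (hbot : ∀ x ∈ Icc 0 L, u (x, -h) = 0)
    (hrobin : ∀ x ∈ Icc 0 L, pdz u (x, 0) + α * u (x, 0) = 0)
    (hw : ∀ x ∈ Icc 0 L, wOp u (x, -h) = 0) :
    ∫ p in dom L h, (u p * pdx u p + wOp u p * pdz u p) * pdz (pdz u) p = 0 := by
  have huz : ContDiff ℝ 1 (pdz u) := hu.pdz_right (by norm_num)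
  have hcux := hu.continuous_pdx (by norm_num)
  have hcuzx := huz.continuous_pdx le_rfl
  have hcuzz := huz.continuous_pdz le_rfl
  have hcw := continuous_wOp hcux
  have hslice : ∀ x ∈ uIcc 0 L,
      ∫ z in (-h)..0,
          (u (x, z) * pdx u (x, z) + wOp u (x, z) * pdz u (x, z)) * pdz (pdz u) (x, z)
        = -α * (u (x, 0) ^ 2 * pdx u (x, 0))
          - ∫ z in (-h)..0, (pdx u (x, z) * pdz u (x, z) ^ 2 / 2
              + u (x, z) * pdz u (x, z) * pdx (pdz u) (x, z)) := by
    intro x hx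
    rw [uIcc_of_le hL] at hx
    rw [integral_advection_mul_pdz_pdz_slice hu (hbot x hx) (hw x hx),
      eq_neg_of_add_eq_zero_left (hrobin x hx)]
    ring
  have htop : ∫ x in 0..L, u (x, 0) ^ 2 * pdx u (x, 0) = 0 := by
    rw [integral_eq_sub_of_hasDerivAt (f := fun x => u (x, 0) ^ 3 / 3)
      (fun x _ => ((hasDerivAt_pdx (hu.differentiable two_ne_zero (x, 0))).fun_pow 3).div_const 3
        |>.congr_deriv (by ring)) ((by fun_prop : Continuous _).intervalIntegrable _ _)]
    simp [hlat 0 ⟨by linarith, le_rfl⟩]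
  have hsides : ∫ x in 0..L, ∫ z in (-h)..0, (pdx u (x, z) * pdz u (x, z) ^ 2 / 2
      + u (x, z) * pdz u (x, z) * pdx (pdz u) (x, z)) = 0 := by
    rw [integral_integral_eq_sub_of_hasDerivAt (F := fun x z => u (x, z) * (pdz u (x, z) ^ 2 / 2))
      (fun x _ z => ((hasDerivAt_pdx (hu.differentiable two_ne_zero (x, z))).fun_mul
        (((hasDerivAt_pdx (huz.differentiable one_ne_zero (x, z))).fun_pow 2).div_const 2))
        |>.congr_deriv (by ring)) (by fun_prop)]
    refine (integral_congr fun z hz => ?_).trans integral_zero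
    rw [uIcc_of_le (by linarith)] at hz
    simp [(hlat z hz).1, (hlat z hz).2]
  rw [setIntegral_dom (by fun_prop) hL hh, integral_congr hslice,
    integral_sub ((by fun_prop : Continuous _).intervalIntegrable _ _)
      ((by fun_prop : Continuous _).intervalIntegrable _ _),
    intervalIntegral.integral_const_mul, htop, hsides]
  ring

end Domain

theorem stmt18_general (L h : ℝ) (hL : 0 < L) (hh : 0 < h) (α : ℝ)
    (u : ℝ × ℝ → ℝ) (hu : ContDiff ℝ 2 u)
    (hlat : ∀ z ∈ Icc (-h) (0:ℝ), u (0, z) = 0 ∧ u (L, z) = 0)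
    (hbot : ∀ x ∈ Icc (0:ℝ) L, u (x, -h) = 0)
    (hrobin : ∀ x ∈ Icc (0:ℝ) L, pdz u (x, 0) + α * u (x, 0) = 0)
    (hmean : ∀ x ∈ Icc (0:ℝ) L, (∫ z in (-h)..(0:ℝ), u (x, z)) = 0) :
    (∫ p in dom L h,
        (u p * pdx u p + wOp u p * pdz u p) * (-(Qop h (pdz (pdz u)) p))) =
      -(2 / h) * ∫ p in dom L h,
        u p * pdx u p * (α * u (p.1, 0) + pdz u (p.1, -h)) := by
  have hu1 : ContDiff ℝ 1 u := hu.of_le (by norm_num)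
  have hcux := hu.continuous_pdx (by norm_num)
  have hcuz := hu.continuous_pdz (by norm_num)
  have hcuzz := (hu.pdz_right (m := 1) (by norm_num)).continuous_pdz le_rfl
  have hcw := continuous_wOp hcux
  have hQ : EqOn (fun p => (u p * pdx u p + wOp u p * pdz u p) * -Qop h (pdz (pdz u)) p)
      (fun p => -((u p * pdx u p + wOp u p * pdz u p) * pdz (pdz u) p)
        - 1 / h * ((u p * pdx u p + wOp u p * pdz u p) * (α * u (p.1, 0) + pdz u (p.1, -h))))
      (dom L h) := by
    rintro ⟨x, z⟩ ⟨hx, -⟩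
    simp only [Qop_pdz_pdz hu, eq_neg_of_add_eq_zero_left (hrobin x (Ioo_subset_Icc_self hx))]
    ring
  rw [setIntegral_congr_fun measurableSet_dom hQ,
    integral_sub (integrableOn_dom (by fun_prop)) (integrableOn_dom (by fun_prop)),
    MeasureTheory.integral_neg, MeasureTheory.integral_const_mul,
    integral_advection_mul_pdz_pdz hu hL.le hh.le hlat hbot hrobin
      (fun x hx => wOp_bottom_eq_zero hu1 hL hmean hx),
    integral_advection_mul_of_fst hu1 hL.le hh.le hbot
      (c := fun x => α * u (x, 0) + pdz u (x, -h)) (by fun_prop)]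
  ring

theorem stmt18 (L h : ℝ) (hL : 0 < L) (hh : 0 < h) (α : ℝ) (hα : 0 < α)
    (u : ℝ × ℝ → ℝ) (hu : ContDiff ℝ 2 u)
    (hlat : ∀ z ∈ Icc (-h) (0:ℝ), u (0, z) = 0 ∧ u (L, z) = 0)
    (hbot : ∀ x ∈ Icc (0:ℝ) L, u (x, -h) = 0)
    (hrobin : ∀ x ∈ Icc (0:ℝ) L, pdz u (x, 0) + α * u (x, 0) = 0)
    (hmean : ∀ x ∈ Icc (0:ℝ) L, (∫ z in (-h)..(0:ℝ), u (x, z)) = 0) :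
    (∫ p in dom L h,
        (u p * pdx u p + wOp u p * pdz u p) * (-(Qop h (pdz (pdz u)) p))) =
      -(2 / h) * ∫ p in dom L h,
        u p * pdx u p * (α * u (p.1, 0) + pdz u (p.1, -h)) :=
  stmt18_general L h hL hh α u hu hlat hbot hrobin hmean
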